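/- Let k be a field of characteristic 2. In R = k[x_{i,j}]/(x_{i,j}²), the GL-stable ideal generated by the single element w_{n+1}·x_{n+2,n+3} (an (n+1)-cycle monomial times a variable with fresh indices) equals m·J, where J is the GL-stable ideal generated by w_{n+1} and m is the maximal ideal of variables. -/

import Mathlib

open MvPolynomial

/-- Index type for the variables `x_{i,j}`, `i ≠ j`: unordered pairs of distinct naturals. -/
abbrev V : Type := {s : Sym2 ℕ // ¬ s.IsDiag}

noncomputable section

variable (k : Type) [Field k]

/-- The variable `x_{i,j}` in the polynomial ring `S = k[x_{i,j} : i < j]`,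
with the conventions `x_{i,j} = x_{j,i}` and `x_{i,i} = 0`. -/
def xS (i j : ℕ) : MvPolynomial V k :=
  if h : i = j then 0 else X ⟨s(i, j), by rwa [Sym2.mk_isDiag_iff]⟩

lemma xS_comm (i j : ℕ) : xS k i j = xS k j i := by
  unfold xS
  rcases eq_or_ne i j with h | h
  · subst h; rfl
  · rw [dif_neg h, dif_neg (Ne.symm h)]
    exact congrArg _ (Subtype.ext (Sym2.eq_swap))

/-- The ideal `m^{[2]}` generated by the squares of all variables. -/
def sqIdealS : Ideal (MvPolynomial V k) :=
  Ideal.span (Set.range fun v : V => (X v : MvPolynomial V k) ^ 2)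

/-- The ring `R = k[x_{i,j}]/(x_{i,j}^2)`. -/
abbrev Rr : Type := MvPolynomial V k ⧸ sqIdealS k

/-- The variable `x_{i,j}` as an element of `R`. -/
def x (i j : ℕ) : Rr k := Ideal.Quotient.mk _ (xS k i j)

/-- The Plücker element. -/
def pluck (a b c d : ℕ) : Rr k :=
  x k a b * x k c d + x k a c * x k b d + x k a d * x k b c

/-- The cycle monomial on the vertices `v 0, v 1, ..., v (r-1)` (in `R`). -/
def cyc {r : ℕ} (v : Fin r → ℕ) : Rr k :=
  ∏ t : Fin r, x k (v t) (v ⟨(t.val + 1) % r, Nat.mod_lt _ (Nat.lt_of_le_of_lt (Nat.zero_le _) t.2)⟩)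

/-- The standard `n`-cycle monomial `w_n = x_{1,2} x_{2,3} ⋯ x_{n,1}`. -/
def w (n : ℕ) : Rr k := cyc k (fun t : Fin n => (t : ℕ) + 1)

/-- The ideal `I_n`, generated by the Plücker elements and the cycle monomials
of lengths `3, ..., n`. -/
def In (n : ℕ) : Ideal (Rr k) :=
  Ideal.span
    ({p | ∃ a b c d : ℕ, a ≠ b ∧ a ≠ c ∧ a ≠ d ∧ b ≠ c ∧ b ≠ d ∧ c ≠ d ∧ p = pluck k a b c d} ∪
     {p | ∃ r : ℕ, 3 ≤ r ∧ r ≤ n ∧ ∃ v : Fin r → ℕ, Function.Injective v ∧ p = cyc k v})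

/-- The `i`-th column `g(e_i)` of an infinite matrix `g`. -/
def col (g : (ℕ →₀ k) →ₗ[k] (ℕ →₀ k)) (i : ℕ) : ℕ →₀ k := g (Finsupp.single i 1)

/-- The image of the variable `x_{i,j} = e_i ∧ e_j` under `g ∈ GL`, in characteristic two:
`Σ_{a,b} g_{a,i} g_{b,j} x_{a,b}` (as element of `S`). -/
def glXS (g : (ℕ →₀ k) →ₗ[k] (ℕ →₀ k)) (i j : ℕ) : MvPolynomial V k :=
  ∑ a ∈ (col k g i).support, ∑ b ∈ (col k g j).support,
    (col k g i a * col k g j b) • xS k a b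

lemma glXS_comm (g : (ℕ →₀ k) →ₗ[k] (ℕ →₀ k)) (i j : ℕ) :
    glXS k g i j = glXS k g j i := by
  unfold glXS
  rw [Finset.sum_comm]
  refine Finset.sum_congr rfl fun b _ => Finset.sum_congr rfl fun a _ => ?_
  rw [mul_comm, xS_comm]

/-- The algebra endomorphism of `S` induced by `g ∈ GL` (valid in characteristic two). -/
def glS (g : (ℕ →₀ k) →ₗ[k] (ℕ →₀ k)) : MvPolynomial V k →ₐ[k] MvPolynomial V k :=
  aeval (fun v : V => Sym2.lift ⟨fun i j => glXS k g i j, fun i j => glXS_comm k g i j⟩ v.1)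

lemma xS_sq_mem (a b : ℕ) : (xS k a b) ^ 2 ∈ sqIdealS k := by
  unfold xS
  split
  · simp
  · exact Ideal.subset_span ⟨_, rfl⟩

lemma glXS_sq_mem [CharP k 2] (g : (ℕ →₀ k) →ₗ[k] (ℕ →₀ k)) (i j : ℕ) :
    (glXS k g i j) ^ 2 ∈ sqIdealS k := by
  haveI : CharP (MvPolynomial V k) 2 := inferInstance
  haveI : Fact (Nat.Prime 2) := ⟨Nat.prime_two⟩
  unfold glXS
  rw [sum_pow_char]
  refine Ideal.sum_mem _ fun a _ => ?_
  rw [sum_pow_char]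
  refine Ideal.sum_mem _ fun b _ => ?_
  rw [smul_pow, Algebra.smul_def]
  exact Ideal.mul_mem_left _ _ (xS_sq_mem k a b)

lemma glS_maps_sq [CharP k 2] (g : (ℕ →₀ k) →ₗ[k] (ℕ →₀ k)) :
    ∀ p ∈ sqIdealS k, glS k g p ∈ sqIdealS k := by
  intro p hp
  have : Ideal.map (glS k g).toRingHom (sqIdealS k) ≤ sqIdealS k := by
    rw [Ideal.map_le_iff_le_comap, sqIdealS, Ideal.span_le]
    rintro q ⟨v, rfl⟩
    simp only [SetLike.mem_coe, Ideal.mem_comap, AlgHom.toRingHom_eq_coe, RingHom.coe_coe,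
      map_pow]
    obtain ⟨s, hs⟩ := v
    induction s using Sym2.ind with
    | _ i j =>
      show (glS k g (X ⟨s(i,j), hs⟩)) ^ 2 ∈ sqIdealS k
      rw [glS, aeval_X]
      simpa using glXS_sq_mem k g i j
  exact this (Ideal.mem_map_of_mem _ hp)

/-- The algebra endomorphism of `R = S/(x_{i,j}^2)` induced by `g ∈ GL`
(in characteristic two the ideal of squares is preserved). -/
def glR [CharP k 2] (g : (ℕ →₀ k) →ₗ[k] (ℕ →₀ k)) : Rr k →ₐ[k] Rr k :=
  Ideal.Quotient.liftₐ (sqIdealS k) ((Ideal.Quotient.mkₐ k (sqIdealS k)).comp (glS k g))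
    (fun p hp => by
      simp only [AlgHom.comp_apply, Ideal.Quotient.mkₐ_eq_mk, Ideal.Quotient.eq_zero_iff_mem]
      exact glS_maps_sq k g p hp)

/-- `g ∈ GL(k^∞)`: a linear automorphism of `k^∞` fixing all but finitely
many of the basis vectors. -/
def IsGL (g : (ℕ →₀ k) ≃ₗ[k] (ℕ →₀ k)) : Prop :=
  {i : ℕ | g (Finsupp.single i 1) ≠ Finsupp.single i 1}.Finite

/-- A `GL`-stable ideal of `R`. -/
def GLStable [CharP k 2] (J : Ideal (Rr k)) : Prop :=
  ∀ g : (ℕ →₀ k) ≃ₗ[k] (ℕ →₀ k), IsGL k g →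
    Ideal.map (glR k g.toLinearMap) J ≤ J

/-- The `GL`-stable ideal of `R` generated by an element `f`:
the span of the `GL`-orbit of `f`. -/
def glIdeal [CharP k 2] (f : Rr k) : Ideal (Rr k) :=
  Ideal.span {p | ∃ g : (ℕ →₀ k) ≃ₗ[k] (ℕ →₀ k), IsGL k g ∧ p = glR k g.toLinearMap f}

/-- The maximal homogeneous ideal of `R`, generated by all the variables. -/
def mIdeal : Ideal (Rr k) := Ideal.span (Set.range fun v : V => Ideal.Quotient.mk _ (X v))

/-! If `f` only involves variables with indices `≤ N`, then `g • (f · x_{N+1,N+2})` is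
`(g • f) · (g e_{N+1} ∧ g e_{N+2})`, which lies in `m · J`. Conversely, to reach `x_{a,b} · (g • f)`,
first move the columns `N+1, N+2` of `g` to fresh basis vectors `e_p, e_q`, then compose with the
transvections `e_p ↦ e_p + c e_a` and `e_q ↦ e_q + d e_b`. For `c, d ∈ {0, 1}` this does not change
`g • f`, and the alternating sum of the four products `(e_p + c e_a) ∧ (e_q + d e_b)` is
`e_a ∧ e_b = x_{a,b}`. -/

section GLAction

variable {k}

lemma x_self (i : ℕ) : x k i i = 0 := by
  rw [x, xS, dif_pos rfl, map_zero]

lemma exists_x_eq_mk_X (v : V) : ∃ a b : ℕ, x k a b = Ideal.Quotient.mk _ (X v) := by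
  obtain ⟨s, hs⟩ := v
  induction s using Sym2.ind with
  | _ a b => exact ⟨a, b, by rw [x, xS, dif_neg (by rwa [Sym2.mk_isDiag_iff] at hs)]⟩

/-- `u ∧ v = Σ_{a,b} u_a v_b x_{a,b}`, as an element of `S`. -/
def wedgeS : (ℕ →₀ k) →ₗ[k] (ℕ →₀ k) →ₗ[k] MvPolynomial V k :=
  Finsupp.linearCombination k fun a => Finsupp.linearCombination k (xS k a)

lemma wedgeS_apply (u v : ℕ →₀ k) :
    wedgeS u v = ∑ a ∈ u.support, ∑ b ∈ v.support, (u a * v b) • xS k a b := by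
  simp only [wedgeS, Finsupp.linearCombination_apply, Finsupp.sum, LinearMap.sum_apply,
    LinearMap.smul_apply, Finset.smul_sum, smul_smul]

lemma wedgeS_single_single (a b : ℕ) :
    wedgeS (Finsupp.single a 1) (Finsupp.single b (1 : k)) = xS k a b := by
  simp [wedgeS]

lemma wedgeS_add_add_sub (u u' v v' : ℕ →₀ k) :
    wedgeS (u + u') (v + v') - wedgeS u (v + v') - wedgeS (u + u') v + wedgeS u v
      = wedgeS u' v' := by
  simp only [map_add, LinearMap.add_apply]
  abel

lemma glXS_eq_wedgeS (g : (ℕ →₀ k) →ₗ[k] (ℕ →₀ k)) (i j : ℕ) :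
    glXS k g i j = wedgeS (col k g i) (col k g j) :=
  (wedgeS_apply _ _).symm

lemma mk_xS_mem_mIdeal (a b : ℕ) : Ideal.Quotient.mk (sqIdealS k) (xS k a b) ∈ mIdeal k := by
  unfold xS
  split
  · simp
  · exact Ideal.subset_span ⟨_, rfl⟩

lemma mk_wedgeS_mem_mIdeal (u v : ℕ →₀ k) :
    Ideal.Quotient.mk (sqIdealS k) (wedgeS u v) ∈ mIdeal k := by
  rw [wedgeS_apply, map_sum]
  refine Ideal.sum_mem _ fun a _ => ?_
  rw [map_sum]
  refine Ideal.sum_mem _ fun b _ => ?_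
  rw [smul_eq_C_mul, map_mul]
  exact Ideal.mul_mem_left _ _ (mk_xS_mem_mIdeal a b)

lemma col_trans (g₁ g₂ : (ℕ →₀ k) ≃ₗ[k] (ℕ →₀ k)) (i : ℕ) :
    col k (g₁.trans g₂).toLinearMap i = g₂ (col k g₁.toLinearMap i) := rfl

lemma IsGL.trans {g₁ g₂ : (ℕ →₀ k) ≃ₗ[k] (ℕ →₀ k)} (h₁ : IsGL k g₁) (h₂ : IsGL k g₂) :
    IsGL k (g₁.trans g₂) := by
  refine (h₁.union h₂).subset fun i hi => ?_
  by_contra hmem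
  simp only [Set.mem_union, Set.mem_ofPred_eq, not_or, not_not] at hmem
  exact hi (by rw [LinearEquiv.trans_apply, hmem.1, hmem.2])

lemma isGL_domLCongr_swap (i j : ℕ) : IsGL k (Finsupp.domLCongr (Equiv.swap i j)) := by
  refine (Set.toFinite {i, j}).subset fun m hm => ?_
  by_contra hmem
  simp only [Set.mem_insert_iff, Set.mem_singleton_iff, not_or] at hmem
  exact hm (by rw [Finsupp.domLCongr_single, Equiv.swap_apply_of_ne_of_ne hmem.1 hmem.2])

lemma IsGL.eventually_fresh {g : (ℕ →₀ k) ≃ₗ[k] (ℕ →₀ k)} (hg : IsGL k g) (N : ℕ) :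
    ∀ᶠ m in Filter.atTop, g (Finsupp.single m 1) = Finsupp.single m 1 ∧
      ∀ i ≤ N, col k g.toLinearMap i m = 0 := by
  rw [← Nat.cofinite_eq_atTop]
  refine (hg.eventually_cofinite_notMem.mono fun m hm => not_not.1 hm).and ?_
  refine (Filter.eventually_all_finite (Set.finite_Iic N)).2 fun i _ => ?_
  exact (col k g.toLinearMap i).support.eventually_cofinite_notMem.mono
    fun m hm => Finsupp.notMem_support_iff.1 hm

/-- `e_p ↦ e_p + c e_a`, fixing the other basis vectors. -/
def basisTransvection (a p : ℕ) (c : k) (hap : a ≠ p) : (ℕ →₀ k) ≃ₗ[k] (ℕ →₀ k) :=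
  LinearEquiv.transvection (f := Finsupp.lapply p) (v := c • Finsupp.single a 1)
    (by simp [hap])

lemma basisTransvection_apply_of_eq_zero {a p : ℕ} {c : k} (hap : a ≠ p) {u : ℕ →₀ k}
    (hu : u p = 0) : basisTransvection a p c hap u = u := by
  rw [basisTransvection, LinearEquiv.transvection.apply, Finsupp.lapply_apply, hu, zero_smul,
    add_zero]

lemma basisTransvection_single_self {a p : ℕ} {c : k} (hap : a ≠ p) :
    basisTransvection a p c hap (Finsupp.single p 1) =
      Finsupp.single p 1 + c • Finsupp.single a 1 := by
  rw [basisTransvection, LinearEquiv.transvection.apply, Finsupp.lapply_apply,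
    Finsupp.single_eq_same, one_smul]

lemma isGL_basisTransvection {a p : ℕ} {c : k} (hap : a ≠ p) :
    IsGL k (basisTransvection a p c hap) := by
  refine (Set.finite_singleton p).subset fun m hm => ?_
  by_contra hmp
  exact hm (basisTransvection_apply_of_eq_zero hap (by simpa [Finsupp.single_apply] using hmp))

lemma IsGL.exists_col_eq_single {g : (ℕ →₀ k) ≃ₗ[k] (ℕ →₀ k)} (hg : IsGL k g) {N M : ℕ}
    (hM : N + 2 < M) (hgM : g (Finsupp.single M 1) = Finsupp.single M 1)
    (hgM' : g (Finsupp.single (M + 1) 1) = Finsupp.single (M + 1) 1) :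
    ∃ h : (ℕ →₀ k) ≃ₗ[k] (ℕ →₀ k), IsGL k h ∧
      (∀ i ≤ N, col k h.toLinearMap i = col k g.toLinearMap i) ∧
      col k h.toLinearMap (N + 1) = Finsupp.single M 1 ∧
      col k h.toLinearMap (N + 2) = Finsupp.single (M + 1) 1 := by
  let h := ((Finsupp.domLCongr (Equiv.swap (N + 1) M)).trans
    (Finsupp.domLCongr (Equiv.swap (N + 2) (M + 1)))).trans g
  have hcol : ∀ i, col k h.toLinearMap i =
      g (Finsupp.single (Equiv.swap (N + 2) (M + 1) (Equiv.swap (N + 1) M i)) 1) := fun i => by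
    simp only [h, col, LinearEquiv.coe_coe, LinearEquiv.trans_apply, Finsupp.domLCongr_single]
  refine ⟨h, ((isGL_domLCongr_swap _ _).trans (isGL_domLCongr_swap _ _)).trans hg,
    fun i hi => ?_, ?_, ?_⟩ <;> rw [hcol]
  · rw [Equiv.swap_apply_of_ne_of_ne (x := i) (by omega) (by omega),
      Equiv.swap_apply_of_ne_of_ne (by omega) (by omega)]
    rfl
  · rw [Equiv.swap_apply_left, Equiv.swap_apply_of_ne_of_ne (by omega) (by omega), hgM]
  · rw [Equiv.swap_apply_of_ne_of_ne (x := N + 2) (by omega) (by omega), Equiv.swap_apply_left,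
      hgM']

variable [CharP k 2]

lemma glR_x (g : (ℕ →₀ k) →ₗ[k] (ℕ →₀ k)) {i j : ℕ} (hij : i ≠ j) :
    glR k g (x k i j) = Ideal.Quotient.mk _ (wedgeS (col k g i) (col k g j)) := by
  rw [← glXS_eq_wedgeS, x, xS, dif_neg hij]
  show Ideal.Quotient.mk _ (glS k g (X _)) = _
  rw [glS, aeval_X]
  rfl

lemma glR_x_mem_mIdeal (g : (ℕ →₀ k) →ₗ[k] (ℕ →₀ k)) (i j : ℕ) : glR k g (x k i j) ∈ mIdeal k := by
  rcases eq_or_ne i j with rfl | hij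
  · rw [x_self, map_zero]
    exact zero_mem _
  · rw [glR_x g hij]
    exact mk_wedgeS_mem_mIdeal _ _

/-- Encodes that `f` only involves the variables `x_{i,j}` with `i, j ≤ N`. -/
def DependsOnColsLE (N : ℕ) (f : Rr k) : Prop :=
  ∀ g h : (ℕ →₀ k) →ₗ[k] (ℕ →₀ k), (∀ i ≤ N, col k g i = col k h i) → glR k g f = glR k h f

lemma dependsOnColsLE_one (N : ℕ) : DependsOnColsLE N (1 : Rr k) :=
  fun g h _ => by rw [map_one, map_one]

lemma DependsOnColsLE.mul {N : ℕ} {f f' : Rr k} (hf : DependsOnColsLE N f)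
    (hf' : DependsOnColsLE N f') : DependsOnColsLE N (f * f') :=
  fun g h hgh => by rw [map_mul, map_mul, hf g h hgh, hf' g h hgh]

lemma dependsOnColsLE_x {N i j : ℕ} (hi : i ≤ N) (hj : j ≤ N) : DependsOnColsLE N (x k i j) := by
  intro g h hgh
  rcases eq_or_ne i j with rfl | hij
  · rw [x_self, map_zero, map_zero]
  · rw [glR_x g hij, glR_x h hij, hgh i hi, hgh j hj]

lemma dependsOnColsLE_w (n : ℕ) : DependsOnColsLE n (w k n) := by
  unfold w cyc
  refine Finset.prod_induction _ _ (fun _ _ => DependsOnColsLE.mul) (dependsOnColsLE_one n)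
    fun t _ => dependsOnColsLE_x (by dsimp only; omega) ?_
  have := Nat.mod_lt (t.val + 1) t.pos
  dsimp only
  omega

lemma DependsOnColsLE.glR_mul_x {N : ℕ} {f : Rr k} (hf : DependsOnColsLE N f)
    {g h : (ℕ →₀ k) →ₗ[k] (ℕ →₀ k)} (hgh : ∀ i ≤ N, col k h i = col k g i) :
    glR k h (f * x k (N + 1) (N + 2)) =
      glR k g f * Ideal.Quotient.mk _ (wedgeS (col k h (N + 1)) (col k h (N + 2))) := by
  rw [map_mul, hf h g hgh, glR_x h (by omega)]

section FreshColumns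

variable {N : ℕ} {f : Rr k} {g : (ℕ →₀ k) ≃ₗ[k] (ℕ →₀ k)} {p q a b : ℕ}

lemma DependsOnColsLE.mul_mk_wedgeS_mem (hf : DependsOnColsLE N f) (hg : IsGL k g)
    (hpq : p ≠ q) (hap : a ≠ p) (hbp : b ≠ p) (hbq : b ≠ q)
    (hp : ∀ i ≤ N, col k g.toLinearMap i p = 0) (hq : ∀ i ≤ N, col k g.toLinearMap i q = 0)
    (hp' : col k g.toLinearMap (N + 1) = Finsupp.single p 1)
    (hq' : col k g.toLinearMap (N + 2) = Finsupp.single q 1) (c d : k) :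
    glR k g.toLinearMap f * Ideal.Quotient.mk _
        (wedgeS (Finsupp.single p 1 + c • Finsupp.single a 1)
          (Finsupp.single q 1 + d • Finsupp.single b 1)) ∈
      glIdeal k (f * x k (N + 1) (N + 2)) := by
  set h := (g.trans (basisTransvection b q d hbq)).trans (basisTransvection a p c hap)
  have hlow : ∀ i ≤ N, col k h.toLinearMap i = col k g.toLinearMap i := fun i hi => by
    rw [col_trans, col_trans, basisTransvection_apply_of_eq_zero hbq (hq i hi),
      basisTransvection_apply_of_eq_zero hap (hp i hi)]
  have hcol₁ : col k h.toLinearMap (N + 1) = Finsupp.single p 1 + c • Finsupp.single a 1 := by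
    rw [col_trans, col_trans, hp', basisTransvection_apply_of_eq_zero hbq
      (by simp [hpq]), basisTransvection_single_self]
  have hcol₂ : col k h.toLinearMap (N + 2) = Finsupp.single q 1 + d • Finsupp.single b 1 := by
    rw [col_trans, col_trans, hq', basisTransvection_single_self,
      basisTransvection_apply_of_eq_zero hap (by simp [hpq, hbp])]
  rw [← hcol₁, ← hcol₂, ← hf.glR_mul_x hlow]
  exact Ideal.subset_span ⟨h, (hg.trans (isGL_basisTransvection _)).trans
    (isGL_basisTransvection _), rfl⟩

lemma DependsOnColsLE.x_mul_glR_mem_of_col_eq_single (hf : DependsOnColsLE N f)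
    (hg : IsGL k g) (hpq : p ≠ q) (hap : a ≠ p) (hbp : b ≠ p) (hbq : b ≠ q)
    (hp : ∀ i ≤ N, col k g.toLinearMap i p = 0) (hq : ∀ i ≤ N, col k g.toLinearMap i q = 0)
    (hp' : col k g.toLinearMap (N + 1) = Finsupp.single p 1)
    (hq' : col k g.toLinearMap (N + 2) = Finsupp.single q 1) :
    x k a b * glR k g.toLinearMap f ∈ glIdeal k (f * x k (N + 1) (N + 2)) := by
  have hmem := hf.mul_mk_wedgeS_mem hg hpq hap hbp hbq hp hq hp' hq'
  have hsum := add_mem (sub_mem (sub_mem (hmem 1 1) (hmem 0 1)) (hmem 1 0)) (hmem 0 0)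
  simp only [one_smul, zero_smul, add_zero] at hsum
  rw [← mul_sub, ← mul_sub, ← mul_add, ← map_sub, ← map_sub, ← map_add, wedgeS_add_add_sub,
    wedgeS_single_single] at hsum
  rw [mul_comm (x k a b)]
  exact hsum

lemma DependsOnColsLE.x_mul_glR_mem (hf : DependsOnColsLE N f) (hg : IsGL k g) (a b : ℕ) :
    x k a b * glR k g.toLinearMap f ∈ glIdeal k (f * x k (N + 1) (N + 2)) := by
  obtain ⟨M₀, hM₀⟩ := Filter.eventually_atTop.1 (hg.eventually_fresh N)
  set M := M₀ + N + a + b + 3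
  obtain ⟨hgM, hcolM⟩ := hM₀ M (by omega)
  obtain ⟨hgM', hcolM'⟩ := hM₀ (M + 1) (by omega)
  obtain ⟨h, hh, hlow, hcol₁, hcol₂⟩ := hg.exists_col_eq_single (N := N) (by omega) hgM hgM'
  rw [← hf _ _ hlow]
  exact hf.x_mul_glR_mem_of_col_eq_single hh (by omega) (by omega) (by omega) (by omega)
    (fun i hi => hlow i hi ▸ hcolM i hi) (fun i hi => hlow i hi ▸ hcolM' i hi) hcol₁ hcol₂

end FreshColumns

lemma glIdeal_mul_x_le (f : Rr k) (i j : ℕ) :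
    glIdeal k (f * x k i j) ≤ mIdeal k * glIdeal k f := by
  rw [glIdeal, Ideal.span_le]
  rintro _ ⟨g, hg, rfl⟩
  rw [map_mul, mul_comm]
  exact Ideal.mul_mem_mul (glR_x_mem_mIdeal _ _ _) (Ideal.subset_span ⟨g, hg, rfl⟩)

theorem DependsOnColsLE.glIdeal_mul_x {N : ℕ} {f : Rr k} (hf : DependsOnColsLE N f) :
    glIdeal k (f * x k (N + 1) (N + 2)) = mIdeal k * glIdeal k f := by
  refine le_antisymm (glIdeal_mul_x_le f _ _) ?_
  rw [mIdeal, glIdeal, Ideal.span_mul_span', Ideal.span_le]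
  rintro _ ⟨_, ⟨v, rfl⟩, _, ⟨g, hg, rfl⟩, rfl⟩
  obtain ⟨a, b, hab⟩ := exists_x_eq_mk_X (k := k) v
  dsimp only
  rw [← hab]
  exact hf.x_mul_glR_mem hg a b

end GLAction

theorem statement_19 [CharP k 2] (n : ℕ) :
    glIdeal k (w k (n + 1) * x k (n + 2) (n + 3)) = mIdeal k * glIdeal k (w k (n + 1)) :=
  (dependsOnColsLE_w (n + 1)).glIdeal_mul_x

end
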